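/- arXiv:1004.2660 — 4 statements merged into one kernel-verified Lean document; each statement's English description precedes it below -/
import Mathlib

section
/- Let p be a prime and ρ : ℤ/p → GL(n,ℤ) a group homomorphism whose action on ℤ^n is free away from 0. Then p - 1 divides n. -/
/-!
Let `g` generate `ℤ/p` and let `M` be the integer matrix of `ρ g`. Then `M ^ p = 1`, and freeness
says that `M - 1` has trivial kernel on `ℤⁿ`, so `det (M - 1) ≠ 0` and `M - 1` is invertible over
`ℚ`. Since `Φ_p(X) (X - 1) = X ^ p - 1`, the cyclotomic polynomial `Φ_p` annihilates `M`. As `Φ_p`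
is irreducible over `ℚ`, this makes `ℚⁿ` a vector space over the field `ℚ[X]/(Φ_p)` of degree
`p - 1` over `ℚ`, so `p - 1` divides `n`.
-/

open Polynomial Module Matrix

theorem Module.End.natDegree_dvd_finrank_of_aeval_eq_zero {K V : Type*} [Field K]
    [AddCommGroup V] [Module K V] {f : Module.End K V} {q : K[X]} (hq : Irreducible q)
    (hf : aeval f q = 0) : q.natDegree ∣ finrank K V := by
  have : (Ideal.span {q}).IsMaximal := PrincipalIdealRing.isMaximal_of_irreducible hq
  have htors : IsTorsionBy K[X] (AEval' f) q := fun v => by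
    rw [← (AEval'.of f).apply_symm_apply v, ← AEval.of_aeval_smul, hf]
    simp
  let := Ideal.Quotient.field (Ideal.span {q})
  let := htors.module
  rw [(AEval'.of f).finrank_eq, ← finrank_mul_finrank K (K[X] ⧸ Ideal.span {q}) (AEval' f),
    finrank_quotient_span_eq_natDegree]
  exact dvd_mul_right _ _

theorem Polynomial.aeval_cyclotomic_prime_eq_zero {R A : Type*} [CommRing R] [Ring A]
    [Algebra R A] {p : ℕ} [Fact p.Prime] {a : A} (hpow : a ^ p = 1) (hunit : IsUnit (a - 1)) :
    aeval a (cyclotomic p R) = 0 := by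
  refine hunit.mul_left_eq_zero.1 ?_
  simpa [hpow] using congrArg (aeval a) (cyclotomic_prime_mul_X_sub_one R p)

theorem Matrix.isUnit_map_of_forall_mulVec_eq_zero {n R K : Type*} [Fintype n] [DecidableEq n]
    [CommRing R] [IsDomain R] [Field K] {f : R →+* K} (hf : Function.Injective f)
    {M : Matrix n n R} (hM : ∀ v, M *ᵥ v = 0 → v = 0) : IsUnit (M.map f) := by
  have hdet : M.det ≠ 0 := fun h => by
    obtain ⟨v, hv0, hv⟩ := exists_mulVec_eq_zero_iff.2 h
    exact hv0 (hM v hv)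
  rw [isUnit_iff_isUnit_det, ← RingHom.mapMatrix_apply, ← RingHom.map_det, isUnit_iff_ne_zero]
  exact (map_ne_zero_iff f hf).2 hdet

theorem Matrix.sub_one_dvd_card_of_pow_prime_eq_one {ι : Type*} [Fintype ι] [DecidableEq ι]
    {p : ℕ} [Fact p.Prime] {M : Matrix ι ι ℤ} (hpow : M ^ p = 1)
    (hfix : ∀ v, M *ᵥ v = v → v = 0) : p - 1 ∣ Fintype.card ι := by
  set Mℚ := M.map (Int.castRingHom ℚ)
  have hpowℚ : Mℚ ^ p = 1 := by
    simp only [Mℚ, ← RingHom.mapMatrix_apply, ← map_pow, hpow, map_one]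
  have hunit : IsUnit (Mℚ - 1) := by
    have := isUnit_map_of_forall_mulVec_eq_zero (RingHom.injective_int (Int.castRingHom ℚ))
      (M := M - 1) fun v hv => hfix v (by rwa [sub_mulVec, one_mulVec, sub_eq_zero] at hv)
    simpa [Mℚ, Matrix.map_sub, Matrix.map_one] using this
  have hΦ : aeval (toLinAlgEquiv' Mℚ) (cyclotomic p ℚ) = 0 := by
    rw [← AlgEquiv.coe_toAlgHom, aeval_algHom_apply, aeval_cyclotomic_prime_eq_zero hpowℚ hunit,
      map_zero]
  have := Module.End.natDegree_dvd_finrank_of_aeval_eq_zero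
    (cyclotomic.irreducible_rat (Fact.out : p.Prime).pos) hΦ
  rwa [natDegree_cyclotomic, Nat.totient_prime Fact.out, finrank_fintype_fun_eq_card] at this

/-- Let `p` be a prime and `ρ : ℤ/p → GL(n,ℤ)` a group homomorphism whose
action on `ℤⁿ` is free away from `0` (for every nonzero `u` and nontrivial `g`,
`ρ(g)u ≠ u`).  Then `p - 1` divides `n`. -/
theorem stmt1 (p n : ℕ) (hp : p.Prime)
    (ρ : Multiplicative (ZMod p) →* ((Fin n → ℤ) ≃ₗ[ℤ] (Fin n → ℤ)))
    (hfree : ∀ g : Multiplicative (ZMod p), g ≠ 1 →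
      ∀ u : Fin n → ℤ, u ≠ 0 → ρ g u ≠ u) :
    (p - 1) ∣ n := by
  have : Fact p.Prime := ⟨hp⟩
  obtain ⟨g, hg⟩ := exists_ne (1 : Multiplicative (ZMod p))
  have hgp : g ^ p = 1 := by simpa using pow_card_eq_one (x := g)
  let toMatrix : Multiplicative (ZMod p) →* Matrix (Fin n) (Fin n) ℤ :=
    (LinearMap.toMatrixAlgEquiv' : _ ≃ₐ[ℤ] _).toMonoidHom.comp
      (LinearEquiv.automorphismGroup.toLinearMapMonoidHom.comp ρ)
  have hpow : toMatrix g ^ p = 1 := by rw [← map_pow, hgp, map_one]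
  have hfix : ∀ v, toMatrix g *ᵥ v = v → v = 0 := fun v hv => by
    by_contra hv0
    exact hfree g hg v hv0 ((LinearMap.toMatrix'_mulVec (ρ g).toLinearMap v).symm.trans hv)
  simpa using sub_one_dvd_card_of_pow_prime_eq_one hpow hfix
end

section
/- Let p be a prime and Γ = ℤ^n ⋊_ρ ℤ/p where the ℤ/p-action ρ on ℤ^n is free away from 0. Then the commutator subgroup [Γ,Γ] equals the image of ρ(t) − id : ℤ^n → ℤ^n (viewed as a subgroup of the normal subgroup ℤ^n ⊆ Γ), where t is a generator of ℤ/p. -/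
/-- The `ℤ/p`-action on `Multiplicative (ℤⁿ)` induced by `ρ`, packaged for forming the
semidirect product `Γ = ℤⁿ ⋊_ρ ℤ/p`. -/
def rhoMulAut {p n : ℕ}
    (ρ : Multiplicative (ZMod p) →* ((Fin n → ℤ) ≃ₗ[ℤ] (Fin n → ℤ))) :
    Multiplicative (ZMod p) →* MulAut (Multiplicative (Fin n → ℤ)) where
  toFun g := AddEquiv.toMultiplicative (ρ g).toAddEquiv
  map_one' := by
    ext x
    simp only [map_one]
    rfl
  map_mul' g h := by
    ext x
    simp only [map_mul]
    rfl

/-!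
In `N ⋊[φ] G` with `N` and `G` abelian, `⁅a, b⁆` lies in `N` and equals
`(φ a.right b.left / b.left) / (φ b.right a.left / a.left)`,
while `⁅inr g, inl n⁆ = inl (φ g n / n)`. So `[Γ, Γ]` is the subgroup of `N` generated by the
displacements `φ g n / n`. If `t` generates `G`, these all lie in the range of `φ t / id`, since
`g ↦ (n ↦ φ g n / n)` is a crossed homomorphism:
`φ (g * h) n / n = (φ g m / m) * (φ h n / n)` with `m = φ h n`.
-/

namespace SemidirectProduct

open scoped commutatorElement

variable {N G : Type*}

theorem commutatorElement_right [Group N] [CommGroup G] {φ : G →* MulAut N}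
    (a b : N ⋊[φ] G) : ⁅a, b⁆.right = 1 := by
  simp [commutatorElement_def, mul_comm a.right b.right]

theorem commutatorElement_left [CommGroup N] [CommGroup G] {φ : G →* MulAut N}
    (a b : N ⋊[φ] G) :
    ⁅a, b⁆.left = φ a.right b.left / b.left / (φ b.right a.left / a.left) := by
  have hconj : a.right * b.right * a.right⁻¹ = b.right := by
    rw [mul_comm a.right, mul_inv_cancel_right]
  have h₁ (x : N) : φ (a.right * b.right) (φ a.right⁻¹ x) = φ b.right x := by
    rw [← MulAut.mul_apply, ← map_mul, hconj]
  have h₂ (x : N) : φ b.right (φ b.right⁻¹ x) = x := by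
    rw [← MulAut.mul_apply, ← map_mul, mul_inv_cancel, map_one, MulAut.one_apply]
  simp only [commutatorElement_def, mul_left, inv_left, mul_right, inv_right, hconj]
  rw [h₁, h₂, map_inv]
  simp only [div_eq_mul_inv, mul_inv, inv_inv, mul_comm, mul_left_comm, mul_assoc]

theorem inl_apply_div_eq_commutatorElement [Group N] [Group G] {φ : G →* MulAut N}
    (g : G) (n : N) : (inl (φ g n / n) : N ⋊[φ] G) = ⁅(inr g : N ⋊[φ] G), inl n⁆ := by
  rw [commutatorElement_def, div_eq_mul_inv, map_mul, inl_aut, map_inv, map_inv]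

theorem apply_div_self_mem_range [CommGroup N] [Group G] {φ : G →* MulAut N} {t : G}
    (ht : ∀ g, g ∈ Subgroup.zpowers t) (g : G) (n : N) :
    φ g n / n ∈ ((φ t).toMonoidHom / MonoidHom.id N).range := by
  have hg := ht g
  rw [Subgroup.zpowers_eq_closure] at hg
  induction hg using Subgroup.closure_induction generalizing n with
  | mem g hg =>
    rw [Set.mem_singleton_iff.1 hg]
    exact ⟨n, rfl⟩
  | one => simp
  | mul g h _ _ hg hh =>
    have := mul_mem (hg (φ h n)) (hh n)
    rwa [div_mul_div_cancel, ← MulAut.mul_apply, ← map_mul] at this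
  | inv g _ hg =>
    have := inv_mem (hg ((φ g)⁻¹ n))
    rwa [inv_div, MulAut.apply_inv_self, ← map_inv] at this

theorem commutator_eq_map_inl_range [CommGroup N] [CommGroup G] {φ : G →* MulAut N} {t : G}
    (ht : ∀ g, g ∈ Subgroup.zpowers t) :
    commutator (N ⋊[φ] G) = ((φ t).toMonoidHom / MonoidHom.id N).range.map inl := by
  apply le_antisymm
  · rw [commutator_def, Subgroup.commutator_le]
    rintro a - b -
    refine ⟨⁅a, b⁆.left, ?_, ?_⟩
    · rw [commutatorElement_left]
      exact div_mem (apply_div_self_mem_range ht _ _) (apply_div_self_mem_range ht _ _)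
    · conv_rhs =>
        rw [← inl_left_mul_inr_right ⁅a, b⁆, commutatorElement_right, map_one, mul_one]
  · rintro - ⟨-, ⟨n, rfl⟩, rfl⟩
    rw [MonoidHom.div_apply, MonoidHom.id_apply, MulEquiv.coe_toMonoidHom,
      inl_apply_div_eq_commutatorElement]
    exact Subgroup.commutator_mem_commutator (Subgroup.mem_top _) (Subgroup.mem_top _)

end SemidirectProduct

theorem range_rhoMulAut_div_id {p n : ℕ}
    (ρ : Multiplicative (ZMod p) →* ((Fin n → ℤ) ≃ₗ[ℤ] (Fin n → ℤ)))
    (t : Multiplicative (ZMod p)) :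
    ((rhoMulAut ρ t).toMonoidHom / MonoidHom.id _).range =
      AddSubgroup.toSubgroup (LinearMap.range
        ((ρ t : (Fin n → ℤ) →ₗ[ℤ] (Fin n → ℤ)) - LinearMap.id)).toAddSubgroup := by
  ext m
  simp only [MonoidHom.mem_range, Multiplicative.mem_toSubgroup, Submodule.mem_toAddSubgroup,
    LinearMap.mem_range]
  exact ⟨fun ⟨x, hx⟩ => ⟨x.toAdd, congrArg Multiplicative.toAdd hx⟩,
    fun ⟨y, hy⟩ => ⟨.ofAdd y, congrArg Multiplicative.ofAdd hy⟩⟩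

theorem stmt4_general (p n : ℕ)
    (ρ : Multiplicative (ZMod p) →* ((Fin n → ℤ) ≃ₗ[ℤ] (Fin n → ℤ)))
    (t : Multiplicative (ZMod p)) (ht : ∀ g, g ∈ Subgroup.zpowers t)
    (x : Multiplicative (Fin n → ℤ) ⋊[rhoMulAut ρ] Multiplicative (ZMod p)) :
    x ∈ commutator (Multiplicative (Fin n → ℤ) ⋊[rhoMulAut ρ] Multiplicative (ZMod p)) ↔
      ∃ v ∈ LinearMap.range ((ρ t : (Fin n → ℤ) →ₗ[ℤ] (Fin n → ℤ)) - LinearMap.id),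
        x = SemidirectProduct.inl (Multiplicative.ofAdd v) := by
  rw [SemidirectProduct.commutator_eq_map_inl_range ht, range_rhoMulAut_div_id, Subgroup.mem_map]
  exact ⟨fun ⟨m, hm, h⟩ => ⟨m.toAdd, hm, h.symm⟩,
    fun ⟨v, hv, h⟩ => ⟨.ofAdd v, hv, h.symm⟩⟩

/-- For `Γ = ℤⁿ ⋊_ρ ℤ/p` with the `ℤ/p`-action `ρ` free away from `0`, the
commutator subgroup `[Γ,Γ]` equals the image of `ρ(t) − id : ℤⁿ → ℤⁿ`, viewed inside the
normal subgroup `ℤⁿ ⊆ Γ`, where `t` generates `ℤ/p`. -/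
theorem stmt4 (p n : ℕ) (hp : p.Prime)
    (ρ : Multiplicative (ZMod p) →* ((Fin n → ℤ) ≃ₗ[ℤ] (Fin n → ℤ)))
    (hfree : ∀ g : Multiplicative (ZMod p), g ≠ 1 →
      ∀ u : Fin n → ℤ, u ≠ 0 → ρ g u ≠ u)
    (t : Multiplicative (ZMod p)) (ht : ∀ g, g ∈ Subgroup.zpowers t)
    (x : Multiplicative (Fin n → ℤ) ⋊[rhoMulAut ρ] Multiplicative (ZMod p)) :
    x ∈ commutator (Multiplicative (Fin n → ℤ) ⋊[rhoMulAut ρ] Multiplicative (ZMod p)) ↔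
      ∃ v ∈ LinearMap.range ((ρ t : (Fin n → ℤ) →ₗ[ℤ] (Fin n → ℤ)) - LinearMap.id),
        x = SemidirectProduct.inl (Multiplicative.ofAdd v) :=
  stmt4_general p n ρ t ht x
end

section
/- Let p be a prime, Γ = ℤ^n ⋊_ρ ℤ/p with ρ free away from 0, and let s ∈ Γ be an element of order p. Then the map sending the class of u ∈ ℤ^n in coker(ρ(t) − id) to the conjugacy class of the cyclic subgroup generated by u·s is a bijection from coker(ρ(t) − id : ℤ^n → ℤ^n) onto the set of conjugacy classes of nontrivial finite subgroups of Γ. -/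
namespace SemidirectProduct

variable {N G : Type*}

section Group

variable [Group N] [Group G] {φ : G →* MulAut N}

@[simp]
theorem right_pow (x : N ⋊[φ] G) (k : ℕ) : (x ^ k).right = x.right ^ k :=
  map_pow rightHom x k

@[simp]
theorem right_zpow (x : N ⋊[φ] G) (k : ℤ) : (x ^ k).right = x.right ^ k :=
  map_zpow rightHom x k

theorem inl_left_of_right_eq_one {x : N ⋊[φ] G} (hx : x.right = 1) : inl x.left = x := by
  simpa [hx] using inl_left_mul_inr_right x

theorem inl_left_mul_inv_left_mul_of_right_eq {x y : N ⋊[φ] G} (h : x.right = y.right) :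
    inl (x.left * y.left⁻¹) * y = x := by
  ext <;> simp [h]

variable [IsMulTorsionFree N]

theorem eq_one_of_right_eq_one {x : N ⋊[φ] G} (hfin : IsOfFinOrder x) (hx : x.right = 1) :
    x = 1 := by
  rw [← inl_left_of_right_eq_one hx] at hfin ⊢
  rw [(inl_injective.isOfFinOrder_iff.1 hfin).eq_one', map_one]

theorem right_ne_one_of_mem {P : Subgroup (N ⋊[φ] G)} [Finite P] {x : N ⋊[φ] G} (hxP : x ∈ P)
    (hx : x ≠ 1) : x.right ≠ 1 :=
  fun h => hx <| eq_one_of_right_eq_one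
    (P.subtype_injective.isOfFinOrder_iff.2 (isOfFinOrder_of_finite (⟨x, hxP⟩ : P))) h

theorem mem_zpowers_of_right_mem_zpowers {P : Subgroup (N ⋊[φ] G)} [Finite P] {y z : N ⋊[φ] G}
    (hy : y ∈ P) (hz : z ∈ P) (h : z.right ∈ Subgroup.zpowers y.right) :
    z ∈ Subgroup.zpowers y := by
  obtain ⟨k, hk⟩ := h
  have hmem : z * (y ^ k)⁻¹ ∈ P := P.mul_mem hz (P.inv_mem (P.zpow_mem hy k))
  have : z * (y ^ k)⁻¹ = 1 := by
    by_contra hne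
    exact right_ne_one_of_mem hmem hne (by simp [← hk])
  exact ⟨k, (mul_inv_eq_one.1 this).symm⟩

/-- A nontrivial finite subgroup meets `N` trivially, so it embeds into `G`; when `G` has prime
order it is therefore cyclic, generated by its element over any prescribed `h ≠ 1`. -/
theorem exists_zpowers_eq_of_finite {p : ℕ} [Fact p.Prime] (hG : Nat.card G = p)
    {P : Subgroup (N ⋊[φ] G)} [Finite P] (hP : P ≠ ⊥) {h : G} (hh : h ≠ 1) :
    ∃ y, y.right = h ∧ Subgroup.zpowers y = P := by
  obtain ⟨x, hxP, hx⟩ := P.bot_or_exists_ne_one.resolve_left hP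
  obtain ⟨j, hj⟩ : h ∈ Subgroup.zpowers x.right := by
    rw [zpowers_eq_top_of_prime_card hG (right_ne_one_of_mem hxP hx)]
    exact Subgroup.mem_top h
  have hyP : x ^ j ∈ P := P.zpow_mem hxP j
  have hyr : (x ^ j).right = h := by simpa using hj
  refine ⟨x ^ j, hyr, le_antisymm (Subgroup.zpowers_le.2 hyP) fun z hz => ?_⟩
  refine mem_zpowers_of_right_mem_zpowers hyP hz ?_
  rw [hyr, zpowers_eq_top_of_prime_card hG hh]
  exact Subgroup.mem_top _

end Group

section CommGroup

variable [CommGroup N] [Group G] {φ : G →* MulAut N}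

theorem mul_inl (x : N ⋊[φ] G) (a : N) : x * inl a = inl (φ x.right a) * x := by
  ext <;> simp [mul_comm]

theorem inl_mul_mul_inv_inl (a : N) (x : N ⋊[φ] G) :
    inl a * x * (inl a)⁻¹ = inl (a * (φ x.right a)⁻¹) * x := by
  rw [mul_assoc, ← map_inv, mul_inl, ← mul_assoc, ← map_mul, map_inv]

theorem aut_right_eq_of_commute {x : N ⋊[φ] G} {a : N} (h : Commute x (inl a)) :
    φ x.right a = a :=
  inl_injective (mul_right_cancel ((mul_inl x a).symm.trans h.eq))

/-- If `x ^ k` lies in `N`, it commutes with `x` and so is fixed by `x.right`. -/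
theorem orderOf_eq_orderOf_right (hφ : ∀ g ≠ 1, ∀ a, φ g a = a → a = 1) {x : N ⋊[φ] G}
    (hx : x.right ≠ 1) : orderOf x = orderOf x.right := by
  refine orderOf_eq_orderOf_iff.2 fun k => ⟨fun h => by simp [← right_pow, h], fun h => ?_⟩
  have hk : inl (x ^ k).left = x ^ k := inl_left_of_right_eq_one (by simpa using h)
  have hfix := aut_right_eq_of_commute (hk ▸ Commute.self_pow x k)
  rw [← hk, hφ _ hx _ hfix, map_one]

theorem zpow_eq_self_of_right_zpow_eq_self (hφ : ∀ g ≠ 1, ∀ a, φ g a = a → a = 1) {x : N ⋊[φ] G}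
    (hx : x.right ≠ 1) {k : ℤ} (hk : x.right ^ k = x.right) : x ^ k = x := by
  have : x.right ^ (k - 1) = 1 := by rw [zpow_sub_one, hk, mul_inv_cancel]
  rw [← orderOf_dvd_iff_zpow_eq_one, ← orderOf_eq_orderOf_right hφ hx,
    orderOf_dvd_iff_zpow_eq_one, zpow_sub_one, mul_inv_eq_one] at this
  exact this

end CommGroup

theorem conj_eq_of_map_conj_zpowers_eq [CommGroup N] [CommGroup G] {φ : G →* MulAut N}
    (hφ : ∀ g ≠ 1, ∀ a, φ g a = a → a = 1) {x y g : N ⋊[φ] G} (hxy : x.right = y.right)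
    (hy : y.right ≠ 1)
    (h : (Subgroup.zpowers x).map (MulAut.conj g).toMonoidHom = Subgroup.zpowers y) :
    g * x * g⁻¹ = y := by
  obtain ⟨k, hk⟩ : g * x * g⁻¹ ∈ Subgroup.zpowers y :=
    h ▸ Subgroup.mem_map_of_mem _ (Subgroup.mem_zpowers x)
  have hright : y.right ^ k = y.right := by
    simpa [mul_inv_cancel_comm, hxy] using congrArg right hk
  rw [← hk]
  exact zpow_eq_self_of_right_zpow_eq_self hφ hy hright

end SemidirectProduct

open SemidirectProduct

section Representation

variable {R M G : Type*} [Ring R] [AddCommGroup M] [Module R M] [Monoid G]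
  (ρ : G →* (M ≃ₗ[R] M))

theorem sub_mem_range_sub_id_of_mem_powers {g h : G} (hg : g ∈ Submonoid.powers h) (x : M) :
    ρ g x - x ∈ LinearMap.range ((ρ h : M →ₗ[R] M) - LinearMap.id) := by
  obtain ⟨m, rfl⟩ := hg
  induction m with
  | zero => simp
  | succ m ih =>
    have hsplit : ρ (h ^ (m + 1)) x - x
        = ((ρ h : M →ₗ[R] M) - LinearMap.id : M →ₗ[R] M) (ρ (h ^ m) x) + (ρ (h ^ m) x - x) := by
      rw [pow_succ', map_mul]
      simp only [LinearMap.sub_apply, LinearMap.id_apply, LinearEquiv.coe_coe,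
        LinearEquiv.mul_apply]
      abel
    rw [hsplit]
    exact Submodule.add_mem _ (LinearMap.mem_range_self _ _) ih

theorem range_sub_id_le_of_mem_powers {g h : G} (hg : g ∈ Submonoid.powers h) :
    LinearMap.range ((ρ g : M →ₗ[R] M) - LinearMap.id)
      ≤ LinearMap.range ((ρ h : M →ₗ[R] M) - LinearMap.id) := by
  rintro _ ⟨x, rfl⟩
  exact sub_mem_range_sub_id_of_mem_powers ρ hg x

end Representation

section Crystallographic

variable {p n : ℕ} (ρ : Multiplicative (ZMod p) →* ((Fin n → ℤ) ≃ₗ[ℤ] (Fin n → ℤ)))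

theorem rhoMulAut_apply (g : Multiplicative (ZMod p)) (a : Multiplicative (Fin n → ℤ)) :
    rhoMulAut ρ g a = Multiplicative.ofAdd (ρ g a.toAdd) := rfl

theorem eq_one_of_rhoMulAut_apply_eq_self (hfree : ∀ g : Multiplicative (ZMod p), g ≠ 1 →
      ∀ u : Fin n → ℤ, u ≠ 0 → ρ g u ≠ u) :
    ∀ g ≠ 1, ∀ a, rhoMulAut ρ g a = a → a = 1 := by
  intro g hg a ha
  by_contra hne
  exact hfree g hg a.toAdd hne (congrArg Multiplicative.toAdd ha)

variable (R : Submodule ℤ (Fin n → ℤ))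

def quotientLeftHom (hR : ∀ g x, ρ g x - x ∈ R) :
    Multiplicative (Fin n → ℤ) ⋊[rhoMulAut ρ] Multiplicative (ZMod p) →*
      Multiplicative ((Fin n → ℤ) ⧸ R) :=
  lift (AddMonoidHom.toMultiplicative R.mkQ.toAddMonoidHom) 1 fun g => by
    refine MonoidHom.ext fun a => ?_
    simp only [MulEquiv.toMonoidHom_eq_coe, MonoidHom.coe_comp, AddMonoidHom.coe_toMultiplicative,
      LinearMap.toAddMonoidHom_coe, MonoidHom.coe_coe, Function.comp_apply, Submodule.mkQ_apply,
      MonoidHom.one_apply, map_one, MulAut.coe_one, id_eq, EmbeddingLike.apply_eq_iff_eq]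
    exact (Submodule.Quotient.eq R).2 (hR g a.toAdd)

theorem quotientLeftHom_inl (hR : ∀ g x, ρ g x - x ∈ R) (u : Fin n → ℤ) :
    quotientLeftHom ρ R hR (inl (Multiplicative.ofAdd u)) = Multiplicative.ofAdd (R.mkQ u) :=
  lift_inl _ _ _ _

theorem sub_mem_of_conj_eq (hR : ∀ g x, ρ g x - x ∈ R)
    {s g : Multiplicative (Fin n → ℤ) ⋊[rhoMulAut ρ] Multiplicative (ZMod p)} {u v : Fin n → ℤ}
    (h : g * (inl (Multiplicative.ofAdd u) * s) * g⁻¹ = inl (Multiplicative.ofAdd v) * s) :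
    u - v ∈ R := by
  have := congrArg (quotientLeftHom ρ R hR) h
  rw [map_mul, map_mul, map_inv, mul_inv_cancel_comm, map_mul, map_mul, quotientLeftHom_inl,
    quotientLeftHom_inl, mul_left_inj, Multiplicative.ofAdd.injective.eq_iff] at this
  exact (Submodule.Quotient.eq R).1 this

theorem exists_conj_eq_of_sub_mem
    (s : Multiplicative (Fin n → ℤ) ⋊[rhoMulAut ρ] Multiplicative (ZMod p)) {u v : Fin n → ℤ}
    (h : u - v ∈ LinearMap.range ((ρ s.right : (Fin n → ℤ) →ₗ[ℤ] (Fin n → ℤ)) - LinearMap.id)) :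
    ∃ g, g * (inl (Multiplicative.ofAdd u) * s) * g⁻¹ = inl (Multiplicative.ofAdd v) * s := by
  obtain ⟨w, hw⟩ := h
  refine ⟨inl (Multiplicative.ofAdd w), ?_⟩
  rw [inl_mul_mul_inv_inl, ← mul_assoc, ← map_mul]
  congr 2
  apply Multiplicative.toAdd.injective
  simp only [toAdd_mul, toAdd_inv, toAdd_ofAdd, mul_right, right_inl, one_mul, rhoMulAut_apply]
  simp only [LinearMap.sub_apply, LinearEquiv.coe_coe, LinearMap.id_apply] at hw
  linear_combination -hw

end Crystallographic

/-- Let `Γ = ℤⁿ ⋊_ρ ℤ/p` (action free away from `0`) and `s ∈ Γ` of order `p`.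
The map sending the class of `u ∈ ℤⁿ` in `coker(ρ(t) − id)` to the conjugacy class of the
cyclic subgroup `⟨u·s⟩` is a bijection onto the set of conjugacy classes of nontrivial
finite subgroups of `Γ`.  This is expressed as: (well-definedness and injectivity) the
subgroups `⟨u·s⟩` and `⟨v·s⟩` are conjugate iff `u - v ∈ im(ρ(t) − id)`, and
(surjectivity) every nontrivial finite subgroup is conjugate to some `⟨u·s⟩`. -/
theorem stmt6 (p n : ℕ) (hp : p.Prime)
    (ρ : Multiplicative (ZMod p) →* ((Fin n → ℤ) ≃ₗ[ℤ] (Fin n → ℤ)))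
    (hfree : ∀ g : Multiplicative (ZMod p), g ≠ 1 →
      ∀ u : Fin n → ℤ, u ≠ 0 → ρ g u ≠ u)
    (t : Multiplicative (ZMod p)) (ht : ∀ g, g ∈ Subgroup.zpowers t)
    (s : Multiplicative (Fin n → ℤ) ⋊[rhoMulAut ρ] Multiplicative (ZMod p))
    (hs : orderOf s = p) :
    (∀ u v : Fin n → ℤ,
      ((∃ g, Subgroup.map (MulAut.conj g).toMonoidHom
            (Subgroup.zpowers (SemidirectProduct.inl (Multiplicative.ofAdd u) * s))
          = Subgroup.zpowers (SemidirectProduct.inl (Multiplicative.ofAdd v) * s)) ↔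
        u - v ∈ LinearMap.range ((ρ t : (Fin n → ℤ) →ₗ[ℤ] (Fin n → ℤ)) - LinearMap.id)))
    ∧ (∀ P : Subgroup (Multiplicative (Fin n → ℤ) ⋊[rhoMulAut ρ] Multiplicative (ZMod p)),
        P ≠ ⊥ → Finite P →
        ∃ (u : Fin n → ℤ)
          (g : Multiplicative (Fin n → ℤ) ⋊[rhoMulAut ρ] Multiplicative (ZMod p)),
          Subgroup.map (MulAut.conj g).toMonoidHom
            (Subgroup.zpowers (SemidirectProduct.inl (Multiplicative.ofAdd u) * s)) = P) := by
  have : Fact p.Prime := ⟨hp⟩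
  have hcard : Nat.card (Multiplicative (ZMod p)) = p := by simp
  have hφ := eq_one_of_rhoMulAut_apply_eq_self ρ hfree
  have hs_right : s.right ≠ 1 := by
    intro h
    rw [eq_one_of_right_eq_one (orderOf_pos_iff.1 (hs.symm ▸ hp.pos)) h, orderOf_one] at hs
    exact hp.one_lt.ne hs
  have ht_powers : ∀ g, g ∈ Submonoid.powers t := fun g => mem_powers_iff_mem_zpowers.2 (ht g)
  have ht_mem : t ∈ Submonoid.powers s.right := mem_powers_iff_mem_zpowers.2
    (zpowers_eq_top_of_prime_card hcard hs_right ▸ Subgroup.mem_top t)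
  have hrange := le_antisymm (range_sub_id_le_of_mem_powers ρ (ht_powers s.right))
    (range_sub_id_le_of_mem_powers ρ ht_mem)
  refine ⟨fun u v => ⟨fun ⟨g, hg⟩ => ?_, fun huv => ?_⟩, fun P hP _ => ?_⟩
  · refine sub_mem_of_conj_eq ρ _ (fun g => sub_mem_range_sub_id_of_mem_powers ρ (ht_powers g))
      (conj_eq_of_map_conj_zpowers_eq hφ ?_ ?_ hg)
    · simp
    · simpa using hs_right
  · obtain ⟨g, hg⟩ := exists_conj_eq_of_sub_mem ρ s (hrange ▸ huv)
    exact ⟨g, by rw [MonoidHom.map_zpowers]; exact congrArg _ hg⟩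
  · obtain ⟨y, hy, rfl⟩ := exists_zpowers_eq_of_finite hcard hP hs_right
    refine ⟨(y.left * s.left⁻¹).toAdd, 1, ?_⟩
    rw [ofAdd_toAdd, inl_left_mul_inv_left_mul_of_right_eq hy, MonoidHom.map_zpowers]
    simp
end

section
/- Let p be an odd prime. Then for 1 ≤ l ≤ p−1, the l-th exterior power Λ^l(ℤ[ℤ/p]) of the group ring ℤ[ℤ/p] (over ℤ), with the ℤ/p-action induced by left multiplication, is a free ℤ[ℤ/p]-module. -/
open ExteriorAlgebra in
/-- The functorial map induced on `n`-th exterior powers by a linear map. -/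
noncomputable def extPowerMap {R M N : Type*} [CommRing R] [AddCommGroup M] [Module R M]
    [AddCommGroup N] [Module R N] (n : ℕ) (f : M →ₗ[R] N) :
    ⋀[R]^n M →ₗ[R] ⋀[R]^n N :=
  (ExteriorAlgebra.map f).toLinearMap.restrict (p := ⋀[R]^n M) (q := ⋀[R]^n N)
    (fun x hx => by
      have h1 : Submodule.map (ExteriorAlgebra.map f).toLinearMap (⋀[R]^n M) ≤ ⋀[R]^n N := by
        rw [exteriorPower, exteriorPower, Submodule.map_pow, ExteriorAlgebra.ι_range_map_map]
        exact pow_le_pow_left' (by rintro y ⟨z, hz, rfl⟩; exact ⟨z, rfl⟩) n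
      exact h1 ⟨x, hx, rfl⟩)

/-!
The wedges `e_{g₁} ∧ ⋯ ∧ e_{gₗ}` of the standard basis of `ℤ[G]`, indexed by `l`-subsets of
`G = ℤ/p`, form a basis of `⋀^l ℤ[G]` which `G` permutes up to sign, acting on subsets by
translation. A subset fixed by some `g ≠ 1` is fixed by the whole group `⟨g⟩ = G`, hence is
empty or everything; so for `0 < l < p` the action on `l`-subsets is free. Choosing one subset
`s` in each orbit, the vectors `g • e_s` then form a basis on which `G` acts by left translation
of the index, i.e. a `ℤ[G]`-basis.
-/

open MulAction Set.powersetCard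

lemma extPowerMap_eq_map {R M N : Type*} [CommRing R] [AddCommGroup M] [Module R M]
    [AddCommGroup N] [Module R N] (n : ℕ) (f : M →ₗ[R] N) :
    extPowerMap n f = exteriorPower.map n f := by
  ext m
  simp [extPowerMap, LinearMap.restrict_apply, ExteriorAlgebra.map_apply_ιMulti, Function.comp_def]

namespace exteriorPower
variable {R M N : Type*} [CommRing R] [AddCommGroup M] [Module R M] [AddCommGroup N] [Module R N]
  {n : ℕ}

lemma exists_ιMulti_comp_embedding_eq_sign_smul {I : Type*} [LinearOrder I] (v : I → M)
    (f : Fin n ↪ I) :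
    ∃ σ : Equiv.Perm (Fin n),
      ιMulti R n (v ∘ f) = σ.sign • ιMulti_family R n v (ofFinEmb n I f) := by
  set e := ofFinEmbEquiv.symm (ofFinEmb n I f)
  have hrange : Set.range e = Set.range f := by
    ext i
    rw [mem_range_ofFinEmbEquiv_symm_iff_mem, mem_ofFinEmb_iff_mem_range]
  let σ : Equiv.Perm (Fin n) := (Equiv.ofInjective f f.injective).trans
    ((Equiv.setCongr hrange.symm).trans (Equiv.ofInjective e e.injective).symm)
  have hσ : (v ∘ e) ∘ σ = v ∘ f := by
    ext i
    simp [σ, Equiv.apply_ofInjective_symm]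
  refine ⟨σ, ?_⟩
  rw [← hσ, AlternatingMap.map_perm]
  rfl

lemma exists_map_ιMulti_family_eq_sign_smul {I J : Type*} [LinearOrder I] [LinearOrder J]
    {v : I → M} {w : J → N} {f : M →ₗ[R] N} (π : I ↪ J) (hf : f ∘ v = w ∘ π)
    (s : Set.powersetCard I n) :
    ∃ σ : Equiv.Perm (Fin n),
      map n f (ιMulti_family R n v s) =
        σ.sign • ιMulti_family R n w (Set.powersetCard.map n π s) := by
  let e := (ofFinEmbEquiv.symm s).toEmbedding.trans π
  have he : ofFinEmb n J e = Set.powersetCard.map n π s := by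
    apply Subtype.ext
    rw [val_ofFinEmb, val_map, ← Finset.map_map, ← val_ofFinEmb, ← ofFinEmbEquiv_apply,
      Equiv.apply_symm_apply]
  obtain ⟨σ, hσ⟩ := exists_ιMulti_comp_embedding_eq_sign_smul (R := R) w e
  refine ⟨σ, ?_⟩
  rw [map_apply_ιMulti_family, hf, ← he, ← hσ]
  rfl

end exteriorPower

lemma Set.powersetCard.stabilizer_eq_bot_of_prime_card {G : Type*} [Group G] [Fintype G]
    [DecidableEq G] (hG : (Nat.card G).Prime) {n : ℕ} (hn : 0 < n) (hnG : n < Nat.card G)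
    (s : Set.powersetCard G n) : stabilizer G s = ⊥ := by
  have : Fact (Nat.card G).Prime := ⟨hG⟩
  refine (Subgroup.eq_bot_or_eq_top_of_prime_card _).resolve_right fun htop => ?_
  obtain ⟨a, ha⟩ : (s : Finset G).Nonempty := Finset.card_pos.mp (s.prop.trans_gt hn)
  have hall : ∀ x : G, x ∈ (s : Finset G) := by
    intro x
    have hx : x * a⁻¹ ∈ stabilizer G s := htop ▸ Subgroup.mem_top _
    rw [mem_stabilizer_iff] at hx
    rw [← hx, coe_smul, Finset.mem_smul_finset]
    exact ⟨a, ha, by simp⟩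
  have := s.prop
  rw [Set.powersetCard.mem_iff, Finset.eq_univ_of_forall hall, Finset.card_univ,
    ← Nat.card_eq_fintype_card] at this
  omega

namespace MulAction
variable {G J : Type*} [Group G] [MulAction G J]

lemma bijective_smul_out_of_stabilizer_eq_bot (hfree : ∀ j : J, stabilizer G j = ⊥) :
    Function.Bijective fun x : orbitRel.Quotient G J × G => x.2 • x.1.out := by
  constructor
  · rintro ⟨q, g⟩ ⟨q', g'⟩ (h : g • q.out = g' • q'.out)
    have hq : q = q' := by
      rw [← q.out_eq, ← q'.out_eq, ← orbitRel.Quotient.quotient_smul_eq (g := g),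
        ← orbitRel.Quotient.quotient_smul_eq (g := g') (a := q'.out), h]
    subst hq
    have hg : g'⁻¹ * g ∈ stabilizer G q.out := by
      rw [mem_stabilizer_iff, mul_smul, h, inv_smul_smul]
    rw [hfree, Subgroup.mem_bot, inv_mul_eq_one] at hg
    rw [hg]
  · intro j
    obtain ⟨g, hg⟩ := Quotient.mk_out (s := orbitRel G J) j
    exact ⟨(⟦j⟧, g⁻¹), inv_smul_eq_iff.mpr hg.symm⟩

end MulAction

namespace Representation
variable {R G M : Type*} [CommRing R] [AddCommGroup M] [Module R M]

noncomputable def exteriorPower [Monoid G] (ρ : Representation R G M) (n : ℕ) :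
    Representation R G (⋀[R]^n M) where
  toFun g := _root_.exteriorPower.map n (ρ g)
  map_one' := by rw [map_one]; exact _root_.exteriorPower.map_id
  map_mul' g h := by rw [map_mul]; exact _root_.exteriorPower.map_comp (ρ h) (ρ g)

lemma exteriorPower_apply [Monoid G] (ρ : Representation R G M) (n : ℕ) (g : G) :
    ρ.exteriorPower n g = _root_.exteriorPower.map n (ρ g) := rfl

lemma leftRegular_eq_mulLeft [Monoid G] (g : G) :
    leftRegular R G g = LinearMap.mulLeft R (MonoidAlgebra.single g (1 : R)) := by
  ext x
  simp

variable [Group G]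

lemma exists_exteriorPower_ιMulti_family_eq_unit_smul {I : Type*} [LinearOrder I]
    [DecidableEq I] [MulAction G I] (ρ : Representation R G M) {v : I → M}
    (hv : ∀ g i, ρ g (v i) = v (g • i)) (n : ℕ) (g : G) (s : Set.powersetCard I n) :
    ∃ u : Rˣ, ρ.exteriorPower n g (_root_.exteriorPower.ιMulti_family R n v s) =
      u • _root_.exteriorPower.ιMulti_family R n v (g • s) := by
  have hs : Set.powersetCard.map n ⟨(g • ·), MulAction.injective g⟩ s = g • s := by
    apply Subtype.ext
    simp [Finset.smul_finset_def, Finset.map_eq_image]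
  obtain ⟨σ, hσ⟩ := _root_.exteriorPower.exists_map_ιMulti_family_eq_sign_smul (R := R)
    (f := ρ g) (w := v) ⟨(g • ·), MulAction.injective g⟩ (funext (hv g)) s
  refine ⟨Units.map (Int.castRingHom R).toMonoidHom σ.sign, ?_⟩
  rw [exteriorPower_apply, hσ, hs, Units.smul_def, Units.smul_def, Units.coe_map]
  exact (Int.cast_smul_eq_zsmul R _ _).symm

lemma exists_basis_orbit_prod_of_monomial {J : Type*} [MulAction G J] (ρ : Representation R G M)
    (v : Module.Basis J R M) (hv : ∀ g j, ∃ u : Rˣ, ρ g (v j) = u • v (g • j))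
    (hfree : ∀ j : J, stabilizer G j = ⊥) :
    ∃ w : Module.Basis (orbitRel.Quotient G J × G) R M,
      ∀ g q h, ρ g (w (q, h)) = w (q, g * h) := by
  let E := Equiv.ofBijective _ (bijective_smul_out_of_stabilizer_eq_bot hfree)
  choose u hu using hv
  let w := (v.reindex E.symm).unitsSMul fun x => u x.2 x.1.out
  have hw : ∀ x, w x = ρ x.2 (v x.1.out) := by
    intro x
    rw [Module.Basis.unitsSMul_apply, Module.Basis.reindex_apply, Equiv.symm_symm, hu]
    rfl
  refine ⟨w, fun g q h => ?_⟩
  rw [hw, hw, map_mul, Module.End.mul_apply]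

lemma exists_linearEquiv_fin_pi_monoidAlgebra_of_basis {ι : Type*} [Finite ι]
    (ρ : Representation R G M) (w : Module.Basis (ι × G) R M)
    (hw : ∀ g i h, ρ g (w (i, h)) = w (i, g * h)) :
    ∃ (c : ℕ) (e : M ≃ₗ[R] (Fin c → MonoidAlgebra R G)),
      ∀ g x, e (ρ g x) = fun i => MonoidAlgebra.single g 1 * e x i := by
  let eι := Finite.equivFin ι
  let b : Module.Basis (ι × G) R (Fin (Nat.card ι) → MonoidAlgebra R G) :=
    (Pi.basis fun _ => MonoidAlgebra.basis G R).reindex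
      ((Equiv.sigmaEquivProd _ G).trans (eι.symm.prodCongr (.refl G)))
  have hb : ∀ x, b x = Pi.single (eι x.1) (MonoidAlgebra.single x.2 1) := by
    intro x
    simp [b]
  let e := w.equiv b (.refl _)
  have he : ∀ y, e (w y) = b y := fun y => w.equiv_apply y b _
  refine ⟨Nat.card ι, e, fun g x => ?_⟩
  let shift : (Fin (Nat.card ι) → MonoidAlgebra R G) →ₗ[R] Fin (Nat.card ι) → MonoidAlgebra R G :=
    LinearMap.pi fun i => LinearMap.mulLeft R (MonoidAlgebra.single g 1) ∘ₗ LinearMap.proj i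
  suffices e.toLinearMap ∘ₗ ρ g = shift ∘ₗ e.toLinearMap from LinearMap.congr_fun this x
  refine w.ext fun ⟨i, h⟩ => ?_
  funext j
  simp [shift, hw, he, hb, Pi.single_apply]

theorem exists_linearEquiv_fin_pi_monoidAlgebra_of_monomial {J : Type*} [Finite J]
    [MulAction G J] (ρ : Representation R G M) (v : Module.Basis J R M)
    (hv : ∀ g j, ∃ u : Rˣ, ρ g (v j) = u • v (g • j))
    (hfree : ∀ j : J, stabilizer G j = ⊥) :
    ∃ (c : ℕ) (e : M ≃ₗ[R] (Fin c → MonoidAlgebra R G)),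
      ∀ g x, e (ρ g x) = fun i => MonoidAlgebra.single g 1 * e x i := by
  obtain ⟨w, hw⟩ := ρ.exists_basis_orbit_prod_of_monomial v hv hfree
  exact ρ.exists_linearEquiv_fin_pi_monoidAlgebra_of_basis w hw

end Representation

theorem stmt7_general (p l : ℕ) (hp : p.Prime) (hl1 : 1 ≤ l) (hl2 : l ≤ p - 1) :
    ∃ (c : ℕ)
      (e : (⋀[ℤ]^l (MonoidAlgebra ℤ (Multiplicative (ZMod p)))) ≃ₗ[ℤ]
        (Fin c → MonoidAlgebra ℤ (Multiplicative (ZMod p)))),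
      ∀ (g : Multiplicative (ZMod p)) (x : ⋀[ℤ]^l (MonoidAlgebra ℤ (Multiplicative (ZMod p)))),
        e (extPowerMap l (LinearMap.mulLeft ℤ (MonoidAlgebra.single g (1 : ℤ))) x)
          = fun i => MonoidAlgebra.single g (1 : ℤ) * e x i := by
  classical
  have : NeZero p := ⟨hp.ne_zero⟩
  let G := Multiplicative (ZMod p)
  -- any order will do: it only fixes the order of the factors in the wedge basis
  let : LinearOrder G := linearOrderOfSTO WellOrderingRel
  have hcard : Nat.card G = p := by simp [G]
  let ρ := (Representation.leftRegular ℤ G).exteriorPower l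
  have hρ : ∀ g : G,
      ρ g = extPowerMap l (LinearMap.mulLeft ℤ (MonoidAlgebra.single g 1)) := by
    intro g
    rw [extPowerMap_eq_map, Representation.exteriorPower_apply,
      Representation.leftRegular_eq_mulLeft]
  have hmonomial : ∀ g s, ∃ u : ℤˣ, ρ g ((MonoidAlgebra.basis G ℤ).exteriorPower l s) =
      u • (MonoidAlgebra.basis G ℤ).exteriorPower l (g • s) := by
    simp only [exteriorPower.basis_apply]
    exact (Representation.leftRegular ℤ G).exists_exteriorPower_ιMulti_family_eq_unit_smul
      (fun g h => by simp) l
  have hfree := Set.powersetCard.stabilizer_eq_bot_of_prime_card (hcard ▸ hp) hl1 (by omega)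
  obtain ⟨c, e, he⟩ := ρ.exists_linearEquiv_fin_pi_monoidAlgebra_of_monomial _ hmonomial hfree
  exact ⟨c, e, fun g x => hρ g ▸ he g x⟩

/-- For an odd prime `p` and `1 ≤ l ≤ p-1`, the `l`-th exterior power (over
`ℤ`) of the group ring `ℤ[ℤ/p]`, with the diagonal `ℤ/p`-action induced by left
multiplication, is a free `ℤ[ℤ/p]`-module; i.e. it is `ℤ/p`-equivariantly isomorphic to a
finite direct sum of copies of `ℤ[ℤ/p]` with the left-multiplication action. -/
theorem stmt7 (p l : ℕ) (hp : p.Prime) (hodd : Odd p) (hl1 : 1 ≤ l) (hl2 : l ≤ p - 1) :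
    ∃ (c : ℕ)
      (e : (⋀[ℤ]^l (MonoidAlgebra ℤ (Multiplicative (ZMod p)))) ≃ₗ[ℤ]
        (Fin c → MonoidAlgebra ℤ (Multiplicative (ZMod p)))),
      ∀ (g : Multiplicative (ZMod p)) (x : ⋀[ℤ]^l (MonoidAlgebra ℤ (Multiplicative (ZMod p)))),
        e (extPowerMap l (LinearMap.mulLeft ℤ (MonoidAlgebra.single g (1 : ℤ))) x)
          = fun i => MonoidAlgebra.single g (1 : ℤ) * e x i :=
  stmt7_general p l hp hl1 hl2
end
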